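/- arXiv:2212.09200 — 5 statements merged into one kernel-verified Lean document; each statement's English description precedes it below -/
import Mathlib

section
/- The number of partially directed walks (walks with steps East, North, South that are self-avoiding) crossing an L×L square from the south-west corner (0,0) to the north-east corner (L,L) equals (L+1)^L. -/
/-- A partially directed walk crossing the `L × L` square: a self-avoiding walk
with steps East `(1,0)`, North `(0,1)`, South `(0,-1)` from `(0,0)` to `(L,L)`
staying in the box `0 ≤ x, y ≤ L`. -/
structure PDW (L : ℕ) where
  n : ℕ
  p : Fin (n + 1) → ℤ × ℤ
  start : p 0 = (0, 0)
  finish : p (Fin.last n) = ((L : ℤ), (L : ℤ))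
  steps : ∀ i : Fin n, p i.succ - p i.castSucc ∈ ({(1, 0), (0, 1), (0, -1)} : Set (ℤ × ℤ))
  selfAvoiding : Function.Injective p
  inBox : ∀ i, 0 ≤ (p i).1 ∧ (p i).1 ≤ (L : ℤ) ∧ 0 ≤ (p i).2 ∧ (p i).2 ≤ (L : ℤ)

namespace PDWAux


/-- the deterministic step function -/
def Fstep (L : ℤ) (v : ℤ → ℤ) (q : ℤ × ℤ) : ℤ × ℤ :=
  if q.1 = L then (q.1, q.2 + 1)
  else if q.2 = v q.1 then (q.1 + 1, q.2)
  else if q.2 < v q.1 then (q.1, q.2 + 1)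
  else (q.1, q.2 - 1)

/-- number of steps remaining -/
def Phi (L : ℕ) (v : ℤ → ℤ) (q : ℤ × ℤ) : ℤ :=
  if q.1 = (L : ℤ) then (L : ℤ) - q.2
  else ((L : ℤ) - q.1) + |v q.1 - q.2|
    + (∑ j ∈ Finset.Ico (q.1.toNat + 1) L, |v (j : ℤ) - v ((j : ℤ) - 1)|)
    + ((L : ℤ) - v ((L : ℤ) - 1))

def InBox (L : ℕ) (q : ℤ × ℤ) : Prop :=
  0 ≤ q.1 ∧ q.1 ≤ (L : ℤ) ∧ 0 ≤ q.2 ∧ q.2 ≤ (L : ℤ)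

def GoodV (L : ℕ) (v : ℤ → ℤ) : Prop :=
  ∀ x : ℤ, 0 ≤ x → x < (L : ℤ) → 0 ≤ v x ∧ v x ≤ (L : ℤ)

lemma Phi_expand (L : ℕ) (v : ℤ → ℤ) (a b : ℤ) (h : a ≠ (L : ℤ)) :
    Phi L v (a, b) = ((L : ℤ) - a) + |v a - b|
      + (∑ j ∈ Finset.Ico (a.toNat + 1) L, |v (j : ℤ) - v ((j : ℤ) - 1)|)
      + ((L : ℤ) - v ((L : ℤ) - 1)) := by
  simp [Phi, h]

lemma Phi_step (L : ℕ) (v : ℤ → ℤ) (q : ℤ × ℤ) (h0 : 0 ≤ q.1) (hL : q.1 ≤ (L : ℤ)) :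
    Phi L v (Fstep L v q) = Phi L v q - 1 := by
  obtain ⟨x, y⟩ := q
  simp only at h0 hL
  by_cases hx : x = (L : ℤ)
  · subst hx
    simp [Fstep, Phi]
    ring
  · have hxL : x < (L : ℤ) := lt_of_le_of_ne hL hx
    by_cases hy : y = v x
    · -- east step
      subst hy
      have e1 : Fstep L v (x, v x) = (x + 1, v x) := by
        simp [Fstep, hx]
      rw [e1]
      by_cases hx1 : x + 1 = (L : ℤ)
      · have hxe : x = (L : ℤ) - 1 := by omega
        have hIco : Finset.Ico (x.toNat + 1) L = ∅ := by
          apply Finset.Ico_eq_empty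
          omega
        rw [Phi_expand L v x (v x) hx, hIco]
        have e2 : Phi L v (x + 1, v x) = (L : ℤ) - v x := by
          simp only [Phi]
          rw [if_pos hx1]
        rw [e2, ← hxe]
        simp
        omega
      · have hlt : x.toNat + 1 < L := by omega
        have hxt1 : (x + 1).toNat = x.toNat + 1 := by omega
        rw [Phi_expand L v x (v x) hx, Phi_expand L v (x+1) (v x) hx1, hxt1]
        rw [Finset.sum_eq_sum_Ico_succ_bot hlt]
        have hc : ((x.toNat + 1 : ℕ) : ℤ) = x + 1 := by omega
        rw [hc, add_sub_cancel_right]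
        simp only [sub_self, abs_zero]
        ring
    · by_cases hlt : y < v x
      · have habs : |v x - (y + 1)| = |v x - y| - 1 := by
          rw [abs_of_nonneg (by omega), abs_of_nonneg (by omega)]; ring
        have e1 : Fstep L v (x, y) = (x, y + 1) := by
          simp [Fstep, hx, hy, hlt]
        rw [e1, Phi_expand L v x (y+1) hx, Phi_expand L v x y hx, habs]
        ring
      · have hgt : v x < y := by omega
        have habs : |v x - (y - 1)| = |v x - y| - 1 := by
          rw [abs_of_nonpos (by omega), abs_of_nonpos (by omega)]; ring
        have e1 : Fstep L v (x, y) = (x, y - 1) := by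
          simp only [Fstep, if_neg hx, if_neg hy, if_neg hlt]
        rw [e1, Phi_expand L v x (y-1) hx, Phi_expand L v x y hx, habs]
        ring

lemma Phi_nonneg (L : ℕ) (v : ℤ → ℤ) (hv : GoodV L v) (q : ℤ × ℤ) (hq : InBox L q) :
    0 ≤ Phi L v q := by
  obtain ⟨x, y⟩ := q
  obtain ⟨h1, h2, h3, h4⟩ := hq
  simp only [Phi]
  split_ifs with hx
  · omega
  · have hxL : x < (L : ℤ) := lt_of_le_of_ne h2 hx
    have hL1 : (1 : ℤ) ≤ L := by omega
    have hvr := hv ((L : ℤ) - 1) (by omega) (by omega)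
    have hsum : (0:ℤ) ≤ ∑ j ∈ Finset.Ico (x.toNat + 1) L, |v (j : ℤ) - v ((j : ℤ) - 1)| :=
      Finset.sum_nonneg fun j _ => abs_nonneg _
    have := abs_nonneg (v x - y)
    omega

lemma Phi_pos (L : ℕ) (v : ℤ → ℤ) (hv : GoodV L v) (q : ℤ × ℤ) (hq : InBox L q)
    (hne : q ≠ ((L : ℤ), (L : ℤ))) : 0 < Phi L v q := by
  obtain ⟨x, y⟩ := q
  obtain ⟨h1, h2, h3, h4⟩ := hq
  simp only [Phi]
  split_ifs with hx
  · have hyL : y ≠ (L : ℤ) := by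
      intro h; exact hne (by rw [hx, h])
    omega
  · have hxL : x < (L : ℤ) := lt_of_le_of_ne h2 hx
    have hL1 : (1 : ℤ) ≤ L := by omega
    have hvr := hv ((L : ℤ) - 1) (by omega) (by omega)
    have hsum : (0:ℤ) ≤ ∑ j ∈ Finset.Ico (x.toNat + 1) L, |v (j : ℤ) - v ((j : ℤ) - 1)| :=
      Finset.sum_nonneg fun j _ => abs_nonneg _
    have := abs_nonneg (v x - y)
    omega

lemma Phi_corner (L : ℕ) (v : ℤ → ℤ) : Phi L v ((L : ℤ), (L : ℤ)) = 0 := by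
  simp [Phi]

lemma eq_corner_of_Phi_eq_zero (L : ℕ) (v : ℤ → ℤ) (hv : GoodV L v) (q : ℤ × ℤ)
    (hq : InBox L q) (h0 : Phi L v q = 0) : q = ((L : ℤ), (L : ℤ)) := by
  by_contra hne
  have := Phi_pos L v hv q hq hne
  omega

lemma Fstep_box (L : ℕ) (v : ℤ → ℤ) (hv : GoodV L v) (q : ℤ × ℤ) (hq : InBox L q)
    (hne : q ≠ ((L : ℤ), (L : ℤ))) : InBox L (Fstep L v q) := by
  obtain ⟨x, y⟩ := q
  obtain ⟨h1, h2, h3, h4⟩ := hq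
  simp only [Fstep, InBox]
  split_ifs with hx hy hlt
  · have hyL : y ≠ (L : ℤ) := by
      intro h; exact hne (by rw [hx, h])
    refine ⟨h1, h2, by omega, by omega⟩
  · exact ⟨by omega, by omega, h3, h4⟩
  · have := hv x h1 (lt_of_le_of_ne h2 hx)
    exact ⟨h1, h2, by omega, by omega⟩
  · have := hv x h1 (lt_of_le_of_ne h2 hx)
    exact ⟨h1, h2, by omega, by omega⟩

lemma Fstep_diff (L : ℕ) (v : ℤ → ℤ) (q : ℤ × ℤ) :
    Fstep L v q - q ∈ ({(1, 0), (0, 1), (0, -1)} : Set (ℤ × ℤ)) := by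
  obtain ⟨x, y⟩ := q
  simp only [Fstep]
  split_ifs <;> simp [Prod.ext_iff]



noncomputable def nOf (L : ℕ) (v : ℤ → ℤ) : ℕ := (Phi L v (0, 0)).toNat

lemma origin_box (L : ℕ) : InBox L ((0 : ℤ), (0 : ℤ)) := by
  refine ⟨le_refl _, by positivity, le_refl _, by positivity⟩

lemma nOf_eq (L : ℕ) (v : ℤ → ℤ) (hv : GoodV L v) : ((nOf L v : ℕ) : ℤ) = Phi L v (0, 0) :=
  Int.toNat_of_nonneg (Phi_nonneg L v hv _ (origin_box L))

lemma iter_inv (L : ℕ) (v : ℤ → ℤ) (hv : GoodV L v) :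
    ∀ t : ℕ, t ≤ nOf L v →
      InBox L ((Fstep L v)^[t] (0, 0)) ∧
      Phi L v ((Fstep L v)^[t] (0, 0)) = Phi L v (0, 0) - t := by
  intro t
  induction t with
  | zero => intro _; exact ⟨origin_box L, by simp⟩
  | succ t ih =>
    intro ht
    obtain ⟨hbox, hphi⟩ := ih (by omega)
    have hpos : 0 < Phi L v ((Fstep L v)^[t] (0, 0)) := by
      have := nOf_eq L v hv
      omega
    have hne : (Fstep L v)^[t] (0, 0) ≠ ((L : ℤ), (L : ℤ)) := by
      intro h
      rw [h, Phi_corner] at hpos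
      omega
    rw [Function.iterate_succ_apply']
    refine ⟨Fstep_box L v hv _ hbox hne, ?_⟩
    rw [Phi_step L v _ hbox.1 hbox.2.1, hphi]
    push_cast
    ring

noncomputable def canon (L : ℕ) (v : ℤ → ℤ) (hv : GoodV L v) : PDW L where
  n := nOf L v
  p := fun i => (Fstep L v)^[(i : ℕ)] (0, 0)
  start := by simp
  finish := by
    have h := iter_inv L v hv (nOf L v) (le_refl _)
    have h0 : Phi L v ((Fstep L v)^[nOf L v] (0, 0)) = 0 := by
      have := nOf_eq L v hv
      omega
    exact eq_corner_of_Phi_eq_zero L v hv _ h.1 h0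
  steps := by
    intro i
    show (Fstep L v)^[(i : ℕ) + 1] (0, 0) - (Fstep L v)^[(i : ℕ)] (0, 0) ∈ _
    rw [Function.iterate_succ_apply']
    exact Fstep_diff L v _
  selfAvoiding := by
    intro i j h
    have hi := iter_inv L v hv i (by omega)
    have hj := iter_inv L v hv j (by omega)
    have h' : (Fstep L v)^[(i : ℕ)] (0, 0) = (Fstep L v)^[(j : ℕ)] (0, 0) := h
    have : Phi L v ((Fstep L v)^[(i : ℕ)] (0, 0)) = Phi L v ((Fstep L v)^[(j : ℕ)] (0, 0)) := by
      rw [h']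
    rw [hi.2, hj.2] at this
    have : (i : ℕ) = (j : ℕ) := by omega
    exact Fin.ext this
  inBox := by
    intro i
    exact (iter_inv L v hv i (by omega)).1

lemma canon_p (L : ℕ) (v : ℤ → ℤ) (hv : GoodV L v) (i : Fin (nOf L v + 1)) :
    (canon L v hv).p i = (Fstep L v)^[(i : ℕ)] (0, 0) := rfl


section Extraction

variable {L : ℕ}

/-- The walk as a function on `ℕ` (clamped at the end). -/
def Q (P : PDW L) (t : ℕ) : ℤ × ℤ := P.p ⟨min t P.n, by omega⟩

lemma Q_eq (P : PDW L) (t : ℕ) (h : t ≤ P.n) : Q P t = P.p ⟨t, by omega⟩ := by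
  simp only [Q, min_eq_left h]

lemma Q_zero (P : PDW L) : Q P 0 = (0, 0) := by
  rw [Q_eq P 0 (Nat.zero_le _)]
  have : (⟨0, by omega⟩ : Fin (P.n + 1)) = 0 := by
    apply Fin.ext; simp
  rw [this, P.start]

lemma Q_last (P : PDW L) : Q P P.n = ((L : ℤ), (L : ℤ)) := by
  rw [Q_eq P P.n (le_refl _)]
  exact P.finish

lemma Q_box (P : PDW L) (t : ℕ) : InBox L (Q P t) := P.inBox _

lemma Q_inj (P : PDW L) (t1 t2 : ℕ) (h1 : t1 ≤ P.n) (h2 : t2 ≤ P.n)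
    (h : Q P t1 = Q P t2) : t1 = t2 := by
  rw [Q_eq P t1 h1, Q_eq P t2 h2] at h
  have := P.selfAvoiding h
  simpa [Fin.ext_iff] using this

lemma Q_step (P : PDW L) (t : ℕ) (h : t < P.n) :
    Q P (t + 1) = Q P t + (1, 0) ∨ Q P (t + 1) = Q P t + (0, 1) ∨
      Q P (t + 1) = Q P t + (0, -1) := by
  have hs := P.steps ⟨t, h⟩
  have e1 : (⟨t, h⟩ : Fin P.n).succ = (⟨t + 1, by omega⟩ : Fin (P.n + 1)) := rfl
  have e2 : (⟨t, h⟩ : Fin P.n).castSucc = (⟨t, by omega⟩ : Fin (P.n + 1)) := rfl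
  rw [e1, e2] at hs
  rw [Q_eq P (t + 1) (by omega), Q_eq P t (by omega)]
  simp only [Set.mem_insert_iff, Set.mem_singleton_iff] at hs
  rcases hs with h' | h' | h'
  · exact Or.inl ((sub_eq_iff_eq_add.mp h').trans (add_comm _ _))
  · exact Or.inr (Or.inl ((sub_eq_iff_eq_add.mp h').trans (add_comm _ _)))
  · exact Or.inr (Or.inr ((sub_eq_iff_eq_add.mp h').trans (add_comm _ _)))

lemma X_step (P : PDW L) (t : ℕ) (h : t < P.n) :
    ((Q P (t + 1)).1 = (Q P t).1 + 1 ∧ (Q P (t + 1)).2 = (Q P t).2) ∨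
    ((Q P (t + 1)).1 = (Q P t).1 ∧
      ((Q P (t + 1)).2 = (Q P t).2 + 1 ∨ (Q P (t + 1)).2 = (Q P t).2 - 1)) := by
  rcases Q_step P t h with h' | h' | h' <;> rw [h'] <;> simp [Prod.ext_iff] <;> ring

lemma X_mono (P : PDW L) (s t : ℕ) (hst : s ≤ t) (htn : t ≤ P.n) :
    (Q P s).1 ≤ (Q P t).1 := by
  induction t, hst using Nat.le_induction with
  | base => exact le_refl _
  | succ t hst ih =>
    have h1 := ih (by omega)
    rcases X_step P t (by omega) with ⟨h2, _⟩ | ⟨h2, _⟩ <;> omega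

lemma exists_cross (P : PDW L) (k : ℕ) (hk : k < L) :
    ∃ t, t < P.n ∧ (Q P t).1 = (k : ℤ) ∧ (Q P (t + 1)).1 = (k : ℤ) + 1 := by
  have main : ∀ m t, t + m = P.n → (Q P t).1 ≤ (k : ℤ) →
      ∃ s, s < P.n ∧ (Q P s).1 = (k : ℤ) ∧ (Q P (s + 1)).1 = (k : ℤ) + 1 := by
    intro m
    induction m with
    | zero =>
      intro t ht hle
      exfalso
      have : t = P.n := by omega
      rw [this, Q_last] at hle
      simp only at hle
      omega
    | succ m ih =>
      intro t ht hle
      have htn : t < P.n := by omega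
      rcases X_step P t htn with ⟨h1, _⟩ | ⟨h1, _⟩
      · by_cases hek : (Q P t).1 = (k : ℤ)
        · exact ⟨t, htn, hek, by omega⟩
        · exact ih (t + 1) (by omega) (by omega)
      · exact ih (t + 1) (by omega) (by omega)
  refine main P.n 0 (by omega) ?_
  rw [Q_zero]
  simp

lemma cross_unique (P : PDW L) (k : ℕ) (t t' : ℕ) (ht : t < P.n) (ht' : t' < P.n)
    (h1 : (Q P t).1 = (k : ℤ)) (h2 : (Q P (t + 1)).1 = (k : ℤ) + 1)
    (h1' : (Q P t').1 = (k : ℤ)) (h2' : (Q P (t' + 1)).1 = (k : ℤ) + 1) : t = t' := by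
  rcases lt_trichotomy t t' with h | h | h
  · exfalso
    have := X_mono P (t + 1) t' (by omega) (by omega)
    omega
  · exact h
  · exfalso
    have := X_mono P (t' + 1) t (by omega) (by omega)
    omega

noncomputable def cross (P : PDW L) (k : ℕ) (hk : k < L) : ℕ := (exists_cross P k hk).choose

lemma cross_spec (P : PDW L) (k : ℕ) (hk : k < L) :
    cross P k hk < P.n ∧ (Q P (cross P k hk)).1 = (k : ℤ) ∧
      (Q P (cross P k hk + 1)).1 = (k : ℤ) + 1 := (exists_cross P k hk).choose_spec

/-- The heights of the `L` east steps. -/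
noncomputable def heights (P : PDW L) : Fin L → Fin (L + 1) :=
  fun k => ⟨((Q P (cross P k.val k.isLt)).2).toNat, by
    have := Q_box P (cross P k.val k.isLt)
    unfold InBox at this
    omega⟩

def vOf (L : ℕ) (w : Fin L → Fin (L + 1)) : ℤ → ℤ :=
  fun x => if h : x.toNat < L then ((w ⟨x.toNat, h⟩ : Fin (L + 1)) : ℤ) else 0

lemma vOf_good (L : ℕ) (w : Fin L → Fin (L + 1)) : GoodV L (vOf L w) := by
  intro x h0 hL
  have hlt : x.toNat < L := by omega
  rw [vOf, dif_pos hlt]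
  have := (w ⟨x.toNat, hlt⟩).isLt
  omega

lemma vOf_coe (L : ℕ) (w : Fin L → Fin (L + 1)) (k : ℕ) (hk : k < L) :
    vOf L w (k : ℤ) = ((w ⟨k, hk⟩ : Fin (L + 1)) : ℤ) := by
  have h1 : ((k : ℤ)).toNat = k := by omega
  rw [vOf]
  rw [dif_pos (show ((k : ℤ)).toNat < L by omega)]
  congr 1

lemma vOf_heights (P : PDW L) (k : ℕ) (hk : k < L) :
    vOf L (heights P) (k : ℤ) = (Q P (cross P k hk)).2 := by
  rw [vOf_coe L (heights P) k hk]
  show (((heights P) ⟨k, hk⟩ : Fin (L + 1)) : ℤ) = _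
  unfold heights
  simp only
  have := Q_box P (cross P k hk)
  unfold InBox at this
  omega

lemma run (P : PDW L) (a b : ℕ) (hab : a < b) (hb : b ≤ P.n)
    (hvert : ∀ u, a ≤ u → u < b → (Q P (u + 1)).1 = (Q P u).1) :
    ∃ d : ℤ, (d = 1 ∨ d = -1) ∧
      ∀ m : ℕ, a + m ≤ b → Q P (a + m) = ((Q P a).1, (Q P a).2 + d * m) := by
  rcases X_step P a (by omega) with ⟨h1, _⟩ | ⟨h1, hY⟩
  · exfalso
    have := hvert a (le_refl _) hab
    omega
  obtain ⟨d, hd, hda⟩ : ∃ d : ℤ, (d = 1 ∨ d = -1) ∧ (Q P (a + 1)).2 = (Q P a).2 + d := by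
    rcases hY with h | h
    · exact ⟨1, Or.inl rfl, h⟩
    · exact ⟨-1, Or.inr rfl, by omega⟩
  refine ⟨d, hd, ?_⟩
  have key : ∀ m : ℕ, a + m + 1 ≤ b →
      Q P (a + m) = ((Q P a).1, (Q P a).2 + d * m) ∧
      Q P (a + m + 1) = ((Q P a).1, (Q P a).2 + d * (m + 1)) := by
    intro m
    induction m with
    | zero =>
      intro h
      refine ⟨by simp, ?_⟩
      have heq : Q P (a + 1) = ((Q P a).1, (Q P a).2 + d) := Prod.ext h1 hda
      show Q P (a + 1) = _
      rw [heq]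
      simp only [Prod.mk.injEq]
      refine ⟨trivial, by push_cast; ring⟩
    | succ m ih =>
      intro h
      obtain ⟨ihm, ihm1⟩ := ih (by omega)
      refine ⟨ihm1.trans (by simp only [Prod.mk.injEq]; exact ⟨trivial, by push_cast; ring⟩), ?_⟩
      have hu : a + m + 1 < b := by omega
      rcases X_step P (a + m + 1) (by omega) with ⟨hh, _⟩ | ⟨hh, hYY⟩
      · exfalso
        have := hvert (a + m + 1) (by omega) hu
        omega
      have hxx : (Q P (a + m + 1 + 1)).1 = (Q P a).1 := by
        rw [hh, ihm1]
      rcases hYY with hup | hdn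
      · -- direction +1; must have d = 1
        rcases hd with hd1 | hd1
        · subst hd1
          have : Q P (a + m + 1 + 1) = ((Q P a).1, (Q P a).2 + 1 * ((m : ℤ) + 1 + 1)) := by
            apply Prod.ext
            · exact hxx
            · rw [hup, ihm1]; simp; ring
          show Q P (a + m + 1 + 1) = _
          rw [this]
          simp only [Prod.mk.injEq]
          refine ⟨trivial, by push_cast; ring⟩
        · -- d = -1 but step up: revisit
          exfalso
          subst hd1
          have hrev : Q P (a + m + 1 + 1) = Q P (a + m) := by
            apply Prod.ext
            · rw [hxx, ihm]
            · rw [hup, ihm1, ihm]; simp; ring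
          have := Q_inj P (a + m + 1 + 1) (a + m) (by omega) (by omega) hrev
          omega
      · rcases hd with hd1 | hd1
        · exfalso
          subst hd1
          have hrev : Q P (a + m + 1 + 1) = Q P (a + m) := by
            apply Prod.ext
            · rw [hxx, ihm]
            · rw [hdn, ihm1, ihm]; simp; ring
          have := Q_inj P (a + m + 1 + 1) (a + m) (by omega) (by omega) hrev
          omega
        · subst hd1
          have : Q P (a + m + 1 + 1) = ((Q P a).1, (Q P a).2 + (-1) * ((m : ℤ) + 1 + 1)) := by
            apply Prod.ext
            · exact hxx
            · rw [hdn, ihm1]; simp; ring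
          show Q P (a + m + 1 + 1) = _
          rw [this]
          simp only [Prod.mk.injEq]
          refine ⟨trivial, by push_cast; ring⟩
  intro m hm
  rcases Nat.eq_zero_or_pos m with h0 | h0
  · subst h0; simp
  · obtain ⟨m', rfl⟩ : ∃ m', m = m' + 1 := ⟨m - 1, by omega⟩
    show Q P (a + m' + 1) = _
    exact ((key m' (by omega)).2).trans
      (by simp only [Prod.mk.injEq]; exact ⟨trivial, by push_cast; ring⟩)

end Extraction


lemma struct (P : PDW L) (t : ℕ) (ht : t < P.n) :
    Q P (t + 1) = Fstep L (vOf L (heights P)) (Q P t) := by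
  obtain ⟨hx0, hxL, hy0, hyL⟩ := Q_box P t
  rcases X_step P t ht with ⟨hE1, hE2⟩ | ⟨hV, hY⟩
  · -- East step
    have hbox1 := Q_box P (t + 1)
    have hxlt : (Q P t).1 < (L : ℤ) := by
      have := hbox1.2.1
      omega
    have hkL : ((Q P t).1).toNat < L := by omega
    have hkc : ((((Q P t).1).toNat : ℕ) : ℤ) = (Q P t).1 := by omega
    have hcr := cross_spec P ((Q P t).1).toNat hkL
    have hteq : t = cross P ((Q P t).1).toNat hkL :=
      cross_unique P ((Q P t).1).toNat t (cross P ((Q P t).1).toNat hkL) ht hcr.1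
        (by omega) (by omega) hcr.2.1 hcr.2.2
    have hv : vOf L (heights P) (Q P t).1 = (Q P t).2 := by
      rw [← hkc, vOf_heights P ((Q P t).1).toNat hkL, ← hteq]
    rw [Fstep, if_neg (show ¬ (Q P t).1 = (L : ℤ) by omega), if_pos hv.symm]
    exact Prod.ext hE1 hE2
  · by_cases hxeq : (Q P t).1 = (L : ℤ)
    · -- in the last column: must go up
      have hvert : ∀ u, t ≤ u → u < P.n → (Q P (u + 1)).1 = (Q P u).1 := by
        intro u hu hun
        have m1 := X_mono P t u hu (by omega)
        have m2 := X_mono P t (u + 1) (by omega) (by omega)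
        have b1 := (Q_box P u).2.1
        have b2 := (Q_box P (u + 1)).2.1
        omega
      obtain ⟨d, hd, hall⟩ := run P t P.n ht (le_refl _) hvert
      have hend := hall (P.n - t) (by omega)
      rw [show t + (P.n - t) = P.n by omega, Q_last] at hend
      have hY2 : (L : ℤ) = (Q P t).2 + d * ((P.n - t : ℕ) : ℤ) := congrArg Prod.snd hend
      have hmge : 1 ≤ ((P.n - t : ℕ) : ℤ) := by omega
      have hd1 : d = 1 := by
        rcases hd with h | h
        · exact h
        · exfalso
          subst h
          nlinarith [hY2, hmge, hyL]
      subst hd1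
      have h1 := hall 1 (by omega)
      rw [Fstep, if_pos hxeq, h1]
      simp only [Prod.mk.injEq]
      exact ⟨trivial, by push_cast; ring⟩
    · -- interior column, vertical step
      have hxlt : (Q P t).1 < (L : ℤ) := lt_of_le_of_ne hxL hxeq
      have hkL : ((Q P t).1).toNat < L := by omega
      have hkc : ((((Q P t).1).toNat : ℕ) : ℤ) = (Q P t).1 := by omega
      have hcr := cross_spec P ((Q P t).1).toNat hkL
      have hts : t < cross P ((Q P t).1).toNat hkL := by
        rcases lt_trichotomy t (cross P ((Q P t).1).toNat hkL) with h | h | h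
        · exact h
        · exfalso
          have := hcr.2.2
          rw [← h] at this
          omega
        · exfalso
          have := X_mono P (cross P ((Q P t).1).toNat hkL + 1) t (by omega) (by omega)
          have h1 := hcr.2.2
          omega
      have hvert : ∀ u, t ≤ u → u < cross P ((Q P t).1).toNat hkL →
          (Q P (u + 1)).1 = (Q P u).1 := by
        intro u hu hus
        have m1 := X_mono P t u hu (by omega)
        have m2 := X_mono P u (cross P ((Q P t).1).toNat hkL) (by omega) (by omega)
        have m3 := X_mono P (u + 1) (cross P ((Q P t).1).toNat hkL) (by omega) (by omega)
        have m4 := X_mono P t (u + 1) (by omega) (by omega)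
        have h1 := hcr.2.1
        omega
      obtain ⟨d, hd, hall⟩ := run P t (cross P ((Q P t).1).toNat hkL) hts (by omega) hvert
      have h1 := hall 1 (by omega)
      have hm := hall (cross P ((Q P t).1).toNat hkL - t) (by omega)
      rw [show t + (cross P ((Q P t).1).toNat hkL - t) = cross P ((Q P t).1).toNat hkL
        by omega] at hm
      have hv : vOf L (heights P) (Q P t).1 = (Q P (cross P ((Q P t).1).toNat hkL)).2 := by
        conv_lhs => rw [← hkc]
        exact vOf_heights P ((Q P t).1).toNat hkL
      have hys : (Q P (cross P ((Q P t).1).toNat hkL)).2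
          = (Q P t).2 + d * (((cross P ((Q P t).1).toNat hkL - t : ℕ)) : ℤ) :=
        congrArg Prod.snd hm
      have hmge : 1 ≤ (((cross P ((Q P t).1).toNat hkL - t : ℕ)) : ℤ) := by omega
      rcases hd with hd1 | hd1 <;> subst hd1
      · have hlt : (Q P t).2 < vOf L (heights P) (Q P t).1 := by
          rw [hv, hys]
          nlinarith [hmge]
        rw [Fstep, if_neg hxeq, if_neg (by omega), if_pos hlt, h1]
        simp only [Prod.mk.injEq]
        exact ⟨trivial, by push_cast; ring⟩
      · have hgt : vOf L (heights P) (Q P t).1 < (Q P t).2 := by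
          rw [hv, hys]
          nlinarith [hmge]
        rw [Fstep, if_neg hxeq, if_neg (by omega), if_neg (by omega), h1]
        simp only [Prod.mk.injEq]
        exact ⟨trivial, by push_cast; ring⟩

lemma Q_iter (P : PDW L) (t : ℕ) (ht : t ≤ P.n) :
    Q P t = (Fstep L (vOf L (heights P)))^[t] (0, 0) := by
  induction t with
  | zero => simpa using Q_zero P
  | succ t ih =>
    rw [Function.iterate_succ_apply', ← ih (by omega)]
    exact struct P t (by omega)

lemma n_eq (P : PDW L) : (P.n : ℤ) = Phi L (vOf L (heights P)) (0, 0) := by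
  have key : ∀ t, t ≤ P.n →
      Phi L (vOf L (heights P)) (Q P t) = Phi L (vOf L (heights P)) (0, 0) - t := by
    intro t
    induction t with
    | zero => intro _; rw [Q_zero]; simp
    | succ t ih =>
      intro ht
      rw [struct P t (by omega), Phi_step L _ _ (Q_box P t).1 (Q_box P t).2.1, ih (by omega)]
      push_cast
      ring
  have h := key P.n (le_refl _)
  rw [Q_last, Phi_corner] at h
  omega

lemma pdw_ext (P1 P2 : PDW L) (hn : P1.n = P2.n)
    (hp : ∀ t : ℕ, t ≤ P1.n → Q P1 t = Q P2 t) : P1 = P2 := by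
  obtain ⟨n1, p1, s1, f1, st1, sa1, ib1⟩ := P1
  obtain ⟨n2, p2, s2, f2, st2, sa2, ib2⟩ := P2
  simp only at hn hp
  subst hn
  have hpp : p1 = p2 := by
    funext i
    have hle : i.val ≤ n1 := Nat.lt_succ_iff.mp i.isLt
    have h := hp i.val hle
    rw [Q_eq _ _ hle, Q_eq _ _ hle] at h
    simpa using h
  subst hpp
  rfl

lemma heights_canon (L : ℕ) (w : Fin L → Fin (L + 1)) :
    heights (canon L (vOf L w) (vOf_good L w)) = w := by
  funext k
  have hcr := cross_spec (canon L (vOf L w) (vOf_good L w)) k.val k.isLt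
  set C := canon L (vOf L w) (vOf_good L w) with hC
  set t := cross C k.val k.isLt with hT
  have hiter : ∀ u, u ≤ C.n → Q C u = (Fstep L (vOf L w))^[u] (0, 0) := by
    intro u hu
    rw [Q_eq C u hu]
    rfl
  have hstep : Q C (t + 1) = Fstep L (vOf L w) (Q C t) := by
    rw [hiter (t + 1) (by omega), hiter t (by omega), Function.iterate_succ_apply']
  have hx := hcr.2.1
  have hx1 := hcr.2.2
  have hyv : (Q C t).2 = vOf L w (Q C t).1 := by
    by_contra hne
    have hfst := congrArg Prod.fst hstep
    rw [Fstep] at hfst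
    split_ifs at hfst
    all_goals first
      | exact hne ‹(Q C t).2 = vOf L w (Q C t).1›
      | (simp at hfst; omega)
  have hval : vOf L w (Q C t).1 = ((w k : Fin (L + 1)) : ℤ) := by
    rw [hx, vOf_coe L w k.val k.isLt]
  have hfin : (Q C t).2 = (((w k : Fin (L + 1)).val : ℕ) : ℤ) := by
    rw [hyv, hval]
  apply Fin.ext
  show ((Q C (cross C k.val k.isLt)).2).toNat = (w k).val
  rw [← hT]
  omega

end PDWAux

theorem pdw_count (L : ℕ) : Nat.card (PDW L) = (L + 1) ^ L := by
  have hinj : Function.Injective (PDWAux.heights (L := L)) := by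
    intro P1 P2 h
    have hv : PDWAux.vOf L (PDWAux.heights P1) = PDWAux.vOf L (PDWAux.heights P2) := by rw [h]
    have hn : P1.n = P2.n := by
      have e1 := PDWAux.n_eq P1
      have e2 := PDWAux.n_eq P2
      rw [hv] at e1
      omega
    apply PDWAux.pdw_ext P1 P2 hn
    intro t ht
    rw [PDWAux.Q_iter P1 t ht, h, ← PDWAux.Q_iter P2 t (by omega)]
  have hsurj : Function.Surjective (PDWAux.heights (L := L)) := fun w =>
    ⟨PDWAux.canon L (PDWAux.vOf L w) (PDWAux.vOf_good L w), PDWAux.heights_canon L w⟩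
  rw [Nat.card_eq_of_bijective _ ⟨hinj, hsurj⟩]
  simp [Nat.card_eq_fintype_card]
end

section
/- (Vieira's criterion, special case) Let p(z) = a_0 + a_1 z + ... + a_n z^n be a self-inversive polynomial of degree n (i.e. p(z) = ω z^n conj(p)(1/z) with |ω| = 1). If |a_{n-1}| > (1/2) Σ_{k=0, k≠1, n-1}^{n} |a_k|, then p has at least n - 2 roots on the unit circle (counted with multiplicity). -/
open Polynomial Complex

private theorem eval_reflect'' (f : ℂ[X]) (n : ℕ) (hf : f.natDegree ≤ n) (z : ℂ) (hz : z ≠ 0) :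
    (reflect n f).eval z = z ^ n * f.eval z⁻¹ := by
  have : Invertible z⁻¹ := invertibleOfNonzero (inv_ne_zero hz)
  have h : (reflect n f).eval (⅟(z⁻¹)) * z⁻¹ ^ n = f.eval z⁻¹ :=
    eval₂_reflect_mul_pow (RingHom.id ℂ) z⁻¹ n f hf
  rw [invOf_eq_inv, inv_inv] at h
  field_simp at h
  rw [one_div] at h
  rw [← h]
  have hzn : z ^ n * z⁻¹ ^ n = 1 := by rw [← mul_pow, mul_inv_cancel₀ hz, one_pow]
  linear_combination (-(reflect n f).eval z) * hzn

private theorem eval_map_conj' (p : ℂ[X]) (w : ℂ) :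
    (p.map (starRingEnd ℂ)).eval w = starRingEnd ℂ (p.eval (starRingEnd ℂ w)) := by
  rw [eval_map]
  conv_lhs => rw [← Complex.conj_conj w]
  rw [eval₂_at_apply]

private theorem coeff_rel (p : ℂ[X]) (n : ℕ) (hn : 1 ≤ n) (hdeg : p.natDegree = n) (ω : ℂ)
    (hfe : ∀ z : ℂ, z ≠ 0 → p.eval z = ω * z ^ n * (p.map (starRingEnd ℂ)).eval (1 / z)) :
    p.coeff 1 = ω * starRingEnd ℂ (p.coeff (n - 1)) := by
  have hq : p = C ω * reflect n (p.map (starRingEnd ℂ)) := by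
    apply eq_of_infinite_eval_eq
    apply Set.Infinite.mono (s := {z : ℂ | z ≠ 0})
    · intro z hz
      have hz' : z ≠ 0 := hz
      simp only [Set.mem_setOf_eq, eval_mul, eval_C]
      rw [eval_reflect'' _ n (le_trans natDegree_map_le hdeg.le) z hz', hfe z hz', one_div]
      ring
    · have : ({z : ℂ | z ≠ 0}) = ({0} : Set ℂ)ᶜ := by ext z; simp
      rw [this]
      exact (Set.finite_singleton 0).infinite_compl
  conv_lhs => rw [hq]
  rw [coeff_C_mul, coeff_reflect, revAt_le hn, coeff_map]

private theorem exists_zeros (g : ℝ → ℝ) (hg : Continuous g) (c : ℂ) (S : ℝ)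
    (hS : S < 2 * ‖c‖) (m : ℕ) (hm : 1 ≤ m)
    (hbound : ∀ θ : ℝ, |g θ - 2 * (c * Complex.exp (Complex.I * ((m : ℂ)/2) * (θ : ℂ))).re| ≤ S) :
    ∃ t : ℕ → ℝ, ∀ j : ℕ, g (t j) = 0 ∧
      (2*Real.pi*j - 2*Complex.arg c)/m < t j ∧ t j < (2*Real.pi*(j+1) - 2*Complex.arg c)/m := by
  have hm0 : (m : ℝ) ≠ 0 := by positivity
  have hmC : (m : ℂ) ≠ 0 := by exact_mod_cast (by positivity : (m:ℝ) ≠ 0)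
  set T : ℕ → ℝ := fun j => (2*Real.pi*j - 2*Complex.arg c)/m with hT_def
  have hTlt : ∀ j : ℕ, T j < T (j + 1) := by
    intro j
    rw [hT_def]
    simp only
    push_cast
    rw [div_lt_div_iff₀ (by positivity) (by positivity)]
    nlinarith [Real.pi_pos, (by positivity : (0:ℝ) < (m:ℝ))]
  have hval : ∀ j : ℕ, c * Complex.exp (Complex.I * ((m : ℂ)/2) * ((T j : ℝ) : ℂ))
      = (-1 : ℂ)^j * (‖c‖ : ℂ) := by
    intro j
    have harg : Complex.I * ((m : ℂ)/2) * ((T j : ℝ) : ℂ)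
        = (j : ℂ) * (Real.pi * Complex.I) + (-(Complex.arg c) * Complex.I) := by
      rw [hT_def]
      push_cast
      field_simp
      ring
    rw [harg, Complex.exp_add, Complex.exp_nat_mul, Complex.exp_pi_mul_I]
    have : c * Complex.exp (-(Complex.arg c) * Complex.I) = (‖c‖ : ℂ) := by
      nth_rewrite 1 [← Complex.norm_mul_exp_arg_mul_I c]
      rw [mul_assoc, ← Complex.exp_add]
      have h0 : (Complex.arg c : ℂ) * Complex.I + -(Complex.arg c) * Complex.I = 0 := by ring
      rw [h0, Complex.exp_zero, mul_one]
    rw [← mul_assoc, mul_comm c, mul_assoc, this]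
  have hpos : ∀ j : ℕ, Even j → 0 < g (T j) := by
    intro j hj
    have hb := hbound (T j)
    rw [hval j, hj.neg_one_pow] at hb
    simp only [one_mul, Complex.ofReal_re] at hb
    rw [abs_le] at hb
    linarith [hb.1]
  have hneg : ∀ j : ℕ, Odd j → g (T j) < 0 := by
    intro j hj
    have hb := hbound (T j)
    rw [hval j, hj.neg_one_pow] at hb
    simp only [neg_mul, one_mul, Complex.ofReal_re, neg_re] at hb
    rw [abs_le] at hb
    linarith [hb.2]
  have key : ∀ j : ℕ, ∃ t, t ∈ Set.Ioo (T j) (T (j+1)) ∧ g t = 0 := by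
    intro j
    rcases Nat.even_or_odd j with hj | hj
    · obtain ⟨t, ht, hgt⟩ := intermediate_value_Ioo' (hTlt j).le hg.continuousOn
        (Set.mem_Ioo.mpr ⟨hneg (j+1) (Even.add_one hj), hpos j hj⟩)
      exact ⟨t, ht, hgt⟩
    · obtain ⟨t, ht, hgt⟩ := intermediate_value_Ioo (hTlt j).le hg.continuousOn
        (Set.mem_Ioo.mpr ⟨hneg j hj, hpos (j+1) (Odd.add_one hj)⟩)
      exact ⟨t, ht, hgt⟩
  choose t ht using key
  refine ⟨t, fun j => ⟨(ht j).2, (ht j).1.1, ?_⟩⟩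
  have := (ht j).1.2
  rw [hT_def] at this
  simpa using this

open Polynomial in
/-- Vieira's criterion, special case `l = 1`: a self-inversive polynomial of degree `n`
whose coefficient `a_{n-1}` dominates half the sum of the absolute values of the other
coefficients (excluding `a_1` and `a_{n-1}`) has at least `n - 2` roots on the unit
circle, counted with multiplicity. -/
theorem vieira_l_eq_one (n : ℕ) (p : Polynomial ℂ)
    (hdeg : p.natDegree = n) (hlead : p.coeff n ≠ 0)
    (hself : ∃ ω : ℂ, ‖ω‖ = 1 ∧
      ∀ z : ℂ, z ≠ 0 → p.eval z = ω * z ^ n * (p.map (starRingEnd ℂ)).eval (1 / z))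
    (hcoeff : ‖p.coeff (n - 1)‖ >
      (1 / 2) * ∑ k ∈ (Finset.range (n + 1)).filter (fun k => k ≠ 1 ∧ k ≠ n - 1),
        ‖p.coeff k‖) :
    n - 2 ≤ (p.roots.filter (fun z => ‖z‖ = 1)).card := by
  rcases le_or_gt n 2 with hn2 | hn2
  · simp [Nat.sub_eq_zero_of_le hn2]
  set m : ℕ := n - 2 with hm_def
  have hm : 1 ≤ m := by omega
  have hmn : n = m + 2 := by omega
  obtain ⟨ω, hω, hfe⟩ := hself
  have hω0 : ω ≠ 0 := by intro h; rw [h] at hω; simp at hω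
  set β : ℂ := Complex.exp (Complex.log ω / 2) with hβ_def
  have hβ2 : β ^ 2 = ω := by
    rw [hβ_def, sq, ← Complex.exp_add, add_halves, Complex.exp_log hω0]
  have hβabs : ‖β‖ = 1 := by
    rw [hβ_def, Complex.norm_exp, Complex.div_ofNat_re, Complex.log_re, hω, Real.log_one]
    norm_num
  have hβ0 : β ≠ 0 := by
    intro h; rw [h] at hβabs; simp at hβabs
  have hβconj : starRingEnd ℂ β = β⁻¹ := by
    rw [← Complex.inv_eq_conj hβabs]
  set a : ℂ := p.coeff (n - 1) with ha_def
  set S : ℝ := ∑ k ∈ (Finset.range (n + 1)).filter (fun k => k ≠ 1 ∧ k ≠ n - 1),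
        ‖p.coeff k‖ with hS_def
  have hS0 : 0 ≤ S := Finset.sum_nonneg fun k _ => norm_nonneg _
  have hSa : S < 2 * ‖a‖ := by linarith [hcoeff]
  have ha0 : a ≠ 0 := by
    intro h
    rw [h] at hSa; simp at hSa; linarith
  set c : ℂ := a * β⁻¹ with hc_def
  have hcabs : ‖c‖ = ‖a‖ := by
    rw [hc_def, norm_mul, norm_inv, hβabs]; simp
  have hc0 : c ≠ 0 := mul_ne_zero ha0 (inv_ne_zero hβ0)
  have hA : p.coeff 1 = ω * starRingEnd ℂ a := coeff_rel p n (by omega) hdeg ω hfe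
  set u : ℝ → ℂ := fun θ => β⁻¹ * Complex.exp (-(Complex.I * n * θ) / 2) *
      p.eval (Complex.exp (Complex.I * θ)) with hu_def
  -- reality of u
  have hureal : ∀ θ : ℝ, starRingEnd ℂ (u θ) = u θ := by
    intro θ
    set z : ℂ := Complex.exp (Complex.I * θ) with hz_def
    have hz0 : z ≠ 0 := Complex.exp_ne_zero _
    have hzconj : starRingEnd ℂ z = z⁻¹ := by
      rw [hz_def, ← Complex.exp_conj, ← Complex.exp_neg]
      congr 1
      simp
    have hfz : p.eval z = ω * z ^ n * starRingEnd ℂ (p.eval z) := by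
      have h := hfe z hz0
      rw [eval_map_conj'] at h
      have h1 : starRingEnd ℂ (1 / z) = z := by
        rw [one_div, map_inv₀, hzconj, inv_inv]
      rw [h1] at h
      exact h
    have hzn : z ^ n = Complex.exp ((n : ℂ) * (Complex.I * θ)) :=
      (Complex.exp_nat_mul _ n).symm
    have hconjexp : starRingEnd ℂ (Complex.exp (-(Complex.I * n * θ) / 2)) =
        Complex.exp ((Complex.I * n * θ) / 2) := by
      rw [← Complex.exp_conj]
      congr 1
      simp only [map_div₀, map_neg, map_mul, Complex.conj_I, map_natCast,
        Complex.conj_ofReal, map_ofNat]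
      ring
    have hβinvconj : starRingEnd ℂ β⁻¹ = β := by
      rw [map_inv₀, hβconj, inv_inv]
    rw [hu_def]
    simp only [map_mul, hβinvconj, hconjexp]
    conv_rhs => rw [hfz]
    rw [← hβ2, hzn]
    have hexp : Complex.exp (-(Complex.I * n * θ) / 2) * Complex.exp ((n : ℂ) * (Complex.I * θ))
        = Complex.exp ((Complex.I * n * θ) / 2) := by
      rw [← Complex.exp_add]; congr 1; ring
    have hββ : β⁻¹ * β ^ 2 = β := by field_simp [sq]
    linear_combination (-(β⁻¹ * β^2 * (starRingEnd ℂ) (p.eval z))) * hexp -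
      (Complex.exp (Complex.I * (n:ℂ) * (θ:ℂ) / 2) * (starRingEnd ℂ) (p.eval z)) * hββ
  -- expansion of u as a sum
  have husum1 : ∀ θ : ℝ, u θ = ∑ k ∈ Finset.range (n+1),
      p.coeff k * β⁻¹ * Complex.exp (Complex.I * ((k:ℂ) - (n:ℂ)/2) * (θ:ℂ)) := by
    intro θ
    rw [hu_def]
    simp only
    rw [eval_eq_sum_range, hdeg, Finset.mul_sum]
    apply Finset.sum_congr rfl
    intro k _
    rw [← Complex.exp_nat_mul]
    have hexp : Complex.exp (-(Complex.I * n * θ) / 2) * Complex.exp ((k : ℂ) * (Complex.I * θ))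
        = Complex.exp (Complex.I * ((k:ℂ) - (n:ℂ)/2) * (θ:ℂ)) := by
      rw [← Complex.exp_add]; congr 1; ring
    rw [← hexp]; ring
  -- split off the two main terms
  have husum : ∀ θ : ℝ, u θ = 2 * ((c * Complex.exp (Complex.I * ((m : ℂ)/2) * (θ:ℂ))).re : ℂ) +
      ∑ k ∈ (Finset.range (n + 1)).filter (fun k => k ≠ 1 ∧ k ≠ n - 1),
        p.coeff k * β⁻¹ * Complex.exp (Complex.I * ((k : ℂ) - (n : ℂ)/2) * (θ:ℂ)) := by
    intro θ
    have hfilter : (Finset.range (n+1)).filter (fun k => ¬(k ≠ 1 ∧ k ≠ n-1)) = {1, n-1} := by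
      ext k
      simp only [Finset.mem_filter, Finset.mem_range, not_and_or, not_ne_iff,
        Finset.mem_insert, Finset.mem_singleton]
      omega
    have hsplit := Finset.sum_filter_add_sum_filter_not (Finset.range (n+1))
      (fun k => k ≠ 1 ∧ k ≠ n-1)
      (fun k => p.coeff k * β⁻¹ * Complex.exp (Complex.I * ((k:ℂ) - (n:ℂ)/2) * (θ:ℂ)))
    rw [hfilter, Finset.sum_pair (show (1:ℕ) ≠ n-1 by omega)] at hsplit
    rw [husum1 θ, ← hsplit]
    set w : ℂ := c * Complex.exp (Complex.I * ((m : ℂ)/2) * (θ:ℂ)) with hw_def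
    have h1 : p.coeff 1 * β⁻¹ * Complex.exp (Complex.I * ((1:ℂ) - (n:ℂ)/2) * (θ:ℂ))
        = starRingEnd ℂ w := by
      rw [hw_def, map_mul, hA, hc_def, map_mul, map_inv₀, hβconj, inv_inv, ← hβ2]
      rw [← Complex.exp_conj]
      have : starRingEnd ℂ (Complex.I * ((m : ℂ)/2) * (θ:ℂ)) =
          Complex.I * ((1:ℂ) - (n:ℂ)/2) * (θ:ℂ) := by
        simp only [map_mul, map_div₀, Complex.conj_I, Complex.conj_ofReal, map_ofNat,
          map_natCast]
        rw [hmn]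
        push_cast
        ring
      rw [this]
      have hββ : β ^ 2 * β⁻¹ = β := by field_simp [sq]
      linear_combination Complex.exp (Complex.I * ((1:ℂ) - (n:ℂ)/2) * (θ:ℂ)) *
        (starRingEnd ℂ) a * hββ
    have h2 : p.coeff (n-1) * β⁻¹ * Complex.exp (Complex.I * (((n-1:ℕ):ℂ) - (n:ℂ)/2) * (θ:ℂ))
        = w := by
      rw [hw_def, hc_def, ← ha_def]
      congr 2
      rw [hmn]
      push_cast
      ring_nf
    simp only [Nat.cast_one]
    rw [h2, h1, add_comm ((starRingEnd ℂ) w) w, Complex.add_conj]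
    push_cast
    ring
  set g : ℝ → ℝ := fun θ => (u θ).re with hg_def
  have hgcont : Continuous g := by
    apply Complex.continuous_re.comp
    rw [hu_def]
    fun_prop
  have hbound : ∀ θ : ℝ, |g θ - 2 * (c * Complex.exp (Complex.I * ((m:ℂ)/2) * (θ:ℂ))).re| ≤ S := by
    intro θ
    have h := husum θ
    have hre : g θ = 2 * (c * Complex.exp (Complex.I * ((m:ℂ)/2) * (θ:ℂ))).re +
        (∑ k ∈ (Finset.range (n + 1)).filter (fun k => k ≠ 1 ∧ k ≠ n - 1),
          p.coeff k * β⁻¹ * Complex.exp (Complex.I * ((k : ℂ) - (n : ℂ)/2) * (θ:ℂ))).re := by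
      rw [hg_def]
      simp only
      rw [h]
      simp
    rw [hre]
    simp only [add_sub_cancel_left]
    calc |(∑ k ∈ (Finset.range (n + 1)).filter (fun k => k ≠ 1 ∧ k ≠ n - 1),
          p.coeff k * β⁻¹ * Complex.exp (Complex.I * ((k : ℂ) - (n : ℂ)/2) * (θ:ℂ))).re|
        ≤ ‖(∑ k ∈ (Finset.range (n + 1)).filter (fun k => k ≠ 1 ∧ k ≠ n - 1),
          p.coeff k * β⁻¹ * Complex.exp (Complex.I * ((k : ℂ) - (n : ℂ)/2) * (θ:ℂ)))‖ :=
          Complex.abs_re_le_norm _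
      _ ≤ ∑ k ∈ (Finset.range (n + 1)).filter (fun k => k ≠ 1 ∧ k ≠ n - 1),
          ‖p.coeff k * β⁻¹ * Complex.exp (Complex.I * ((k : ℂ) - (n : ℂ)/2) * (θ:ℂ))‖ :=
          norm_sum_le _ _
      _ ≤ S := by
          rw [hS_def]
          apply Finset.sum_le_sum
          intro k _
          rw [norm_mul, norm_mul, norm_inv, hβabs]
          have : ‖Complex.exp (Complex.I * ((k : ℂ) - (n : ℂ)/2) * (θ:ℂ))‖ = 1 := by
            rw [Complex.norm_exp]
            have : (Complex.I * ((k : ℂ) - (n : ℂ)/2) * (θ:ℂ)).re = 0 := by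
              simp [Complex.mul_re, Complex.mul_im]
            rw [this, Real.exp_zero]
          rw [this]
          simp
  obtain ⟨t, ht⟩ := exists_zeros g hgcont c S (by rw [hcabs]; exact hSa) m hm hbound
  have hroot : ∀ j : ℕ, p.eval (Complex.exp (Complex.I * (t j))) = 0 := by
    intro j
    have him : (u (t j)).im = 0 := (Complex.conj_eq_iff_im.mp (hureal (t j)))
    have hre : (u (t j)).re = 0 := (ht j).1
    have hu0 : u (t j) = 0 := Complex.ext hre him
    rw [hu_def] at hu0
    simp only at hu0
    have hne1 : β⁻¹ * Complex.exp (-(Complex.I * (n:ℂ) * ((t j : ℝ):ℂ)) / 2) ≠ 0 :=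
      mul_ne_zero (inv_ne_zero hβ0) (Complex.exp_ne_zero _)
    exact (mul_eq_zero.mp hu0).resolve_left hne1
  -- injectivity
  have hp0 : p ≠ 0 := fun h => hlead (by simp [h])
  have htmem : ∀ j : ℕ, (2*Real.pi*j - 2*Complex.arg c)/m < t j ∧
      t j < (2*Real.pi*(j+1) - 2*Complex.arg c)/m := fun j => ⟨(ht j).2.1, (ht j).2.2⟩
  have hm0R : (0:ℝ) < (m:ℝ) := by positivity
  have htlt : ∀ i j : ℕ, i < j → t i < t j := by
    intro i j hlt
    have hnum : 2*Real.pi*((i:ℝ)+1) ≤ 2*Real.pi*(j:ℝ) := by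
      have hij : ((i:ℝ)+1) ≤ (j:ℝ) := by exact_mod_cast hlt
      nlinarith [Real.pi_pos]
    calc t i < (2*Real.pi*((i:ℕ)+1) - 2*Complex.arg c)/m := (htmem i).2
      _ ≤ (2*Real.pi*(j:ℕ) - 2*Complex.arg c)/m := by
          rw [div_le_div_iff_of_pos_right hm0R]
          push_cast
          linarith
      _ < t j := (htmem j).1
  have hfar : ∀ i j : ℕ, i < j → j < m →
      Complex.exp (Complex.I * ((t i : ℝ):ℂ)) ≠ Complex.exp (Complex.I * ((t j : ℝ):ℂ)) := by
    intro i j hlt hjm hij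
    have h1 : t i < t j := htlt i j hlt
    have hdiff : t j - t i < 2 * Real.pi := by
      have hA := (htmem j).2
      have hB := (htmem i).1
      have hle : (j:ℝ) + 1 - (i:ℝ) ≤ (m:ℝ) := by
        have : (j:ℕ) + 1 ≤ m + i := by omega
        push_cast
        have := (Nat.cast_le (α := ℝ)).mpr this
        push_cast at this
        linarith
      have key2 : (2*Real.pi*((j:ℝ)+1) - 2*Complex.arg c)/m -
          (2*Real.pi*(i:ℝ) - 2*Complex.arg c)/m ≤ 2*Real.pi := by
        rw [div_sub_div_same, div_le_iff₀ hm0R]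
        nlinarith [Real.pi_pos]
      push_cast at hA hB key2 ⊢
      linarith
    obtain ⟨k, hk⟩ := Complex.exp_eq_exp_iff_exists_int.mp hij
    have hk2 : Complex.I * ((t i : ℝ):ℂ) =
        Complex.I * (((t j : ℝ):ℂ) + (k:ℂ) * (2 * (Real.pi:ℂ))) := by
      rw [hk]; push_cast; ring
    have hk3 := mul_left_cancel₀ Complex.I_ne_zero hk2
    have hk4 : t i = t j + (k:ℝ) * (2 * Real.pi) := by
      have : ((t i : ℝ):ℂ) = (((t j + (k:ℝ) * (2 * Real.pi)):ℝ):ℂ) := by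
        rw [hk3]; push_cast; ring
      exact_mod_cast this
    have hpi := Real.pi_pos
    rcases lt_trichotomy k 0 with hkneg | hk0 | hkpos
    · have : (k:ℝ) ≤ -1 := by exact_mod_cast Int.le_sub_one_of_lt hkneg
      nlinarith
    · rw [hk0] at hk4; push_cast at hk4; linarith
    · have : (1:ℝ) ≤ (k:ℝ) := by exact_mod_cast hkpos
      nlinarith
  classical
  set f : ℕ → ℂ := fun j => Complex.exp (Complex.I * ((t j : ℝ):ℂ)) with hf_def
  have hinj : Set.InjOn f (Finset.range m) := by
    intro i hi j hj hij
    simp only [Finset.coe_range, Set.mem_Iio] at hi hj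
    rcases Nat.lt_trichotomy i j with hlt | heq | hgt
    · exact absurd hij (hfar i j hlt hj)
    · exact heq
    · exact absurd hij.symm (hfar j i hgt hi)
  set s : Finset ℂ := (Finset.range m).image f with hs_def
  have hscard : s.card = m := by
    rw [hs_def, Finset.card_image_of_injOn hinj, Finset.card_range]
  have hsub : s.val ≤ p.roots.filter (fun z => ‖z‖ = 1) := by
    rw [Multiset.le_iff_count]
    intro z
    by_cases hz : z ∈ s
    · have h1 : s.val.count z = 1 := Multiset.count_eq_one_of_mem s.nodup hz
      rw [h1]
      rw [Nat.one_le_iff_ne_zero, Ne, Multiset.count_eq_zero, not_not]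
      obtain ⟨j, hjm, rfl⟩ := Finset.mem_image.mp hz
      rw [Multiset.mem_filter]
      constructor
      · rw [Polynomial.mem_roots hp0]
        exact hroot j
      · rw [hf_def]
        simp only
        rw [Complex.norm_exp]
        norm_num
    · have : z ∉ s.val := hz
      rw [Multiset.count_eq_zero.mpr this]
      exact Nat.zero_le _
  have hfin := Multiset.card_le_card hsub
  rw [← hscard]
  exact hfin
end

section
/- For t > 1 and L > 2/(t-1), the polynomial A(t,z) = 1 - tz + z^{L+1}(t - z) has a real root z in the open interval (0, 1). Moreover this root satisfies z > 1/t. -/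
theorem real_root_even_case (L : ℕ) (hL : 0 < L) (t : ℝ) (ht : 1 < t)
    (hLbig : (L : ℝ) > 2 / (t - 1)) :
    ∃ z : ℝ, 0 < z ∧ z < 1 ∧ 1 - t * z + z ^ (L + 1) * (t - z) = 0 ∧ 1 / t < z := by
  have ht0 : (0:ℝ) < t := by linarith
  set h : ℝ → ℝ := fun z => (∑ i ∈ Finset.range (L+2), z^i) - t*z*(∑ i ∈ Finset.range L, z^i)
    with hh
  have hcont : ContinuousOn h (Set.Icc (1/t) 1) := by
    apply Continuous.continuousOn
    apply Continuous.sub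
    · exact continuous_finset_sum _ (fun i _ => continuous_pow i)
    · exact ((continuous_const.mul continuous_id).mul
        (continuous_finset_sum _ (fun i _ => continuous_pow i)))
  have hab : (1/t) ≤ 1 := by
    rw [div_le_one ht0]; linarith
  have hpos : 0 < h (1/t) := by
    have : h (1/t) = (1/t)^L + (1/t)^(L+1) := by
      simp only [hh, Finset.sum_range_succ]
      have : t * (1/t) = 1 := by field_simp
      rw [this]
      ring
    rw [this]
    positivity
  have hneg : h 1 < 0 := by
    have hsum : h 1 = ((L:ℝ)+2) - t*(L:ℝ) := by
      simp [hh, Finset.sum_range_succ]; ring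
    have h2 : 2 < (L:ℝ)*(t-1) := by
      have := (div_lt_iff₀ (by linarith : (0:ℝ) < t-1)).mp hLbig
      linarith
    rw [hsum]; nlinarith
  have key : (0:ℝ) ∈ Set.Ioo (h 1) (h (1/t)) := ⟨hneg, hpos⟩
  obtain ⟨z, hz, hz0⟩ := intermediate_value_Ioo' hab hcont key
  refine ⟨z, ?_, hz.2, ?_, hz.1⟩
  · have : 0 < 1/t := by positivity
    linarith [hz.1]
  · have e1 : (1-z) * ∑ i ∈ Finset.range (L+2), z^i = 1 - z^(L+2) := by
      have := geom_sum_mul z (L+2)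
      linear_combination -this
    have e2 : (1-z) * ∑ i ∈ Finset.range L, z^i = 1 - z^L := by
      have := geom_sum_mul z L
      linear_combination -this
    have : (1-z) * h z = 1 - t*z + z^(L+1)*(t-z) := by
      have expand : (1-z) * h z = (1 - z^(L+2)) - t*z*(1 - z^L) := by
        simp only [hh]
        linear_combination e1 - t*z*e2
      rw [expand]
      ring
    rw [← this, hz0, mul_zero]
end

section
/- For real t > 1, if z = e^{iθ} with |z| = 1 satisfies the equation z^{L+1} = (1-tz)/(t-z) and 0 < θ < π, then θ ≥ π/(L+1); i.e. there is no root of 1 - tz - z^{L+1}(t-z) on the open arc {e^{iθ} : 0 < θ < π/(L+1)}. -/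
theorem no_root_small_theta (L : ℕ) (hL : 0 < L) (t : ℝ) (ht : 1 < t)
    (θ : ℝ) (hθ0 : 0 < θ) (hθπ : θ < Real.pi)
    (hroot : (Complex.exp (θ * Complex.I)) ^ (L + 1) =
      (1 - (t : ℂ) * Complex.exp (θ * Complex.I)) /
        ((t : ℂ) - Complex.exp (θ * Complex.I))) :
    Real.pi / (L + 1) ≤ θ := by
  by_contra hlt
  push_neg at hlt
  have hL1 : (0:ℝ) < (L:ℝ) + 1 := by positivity
  have hlt' : ((L:ℝ) + 1) * θ < Real.pi := by
    have := (lt_div_iff₀ hL1).mp hlt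
    nlinarith
  set c := Complex.exp (θ * Complex.I) with hc
  have habs : ‖c‖ = 1 := Complex.norm_exp_ofReal_mul_I θ
  have hz : (t : ℂ) - c ≠ 0 := by
    intro h
    have h' : (t:ℂ) = c := by linear_combination h
    have := congrArg (‖·‖) h'
    rw [habs, Complex.norm_real, Real.norm_eq_abs, abs_of_pos (by linarith)] at this
    linarith
  rw [eq_div_iff hz] at hroot
  have hpow : c ^ (L+1) = Complex.exp (((((L:ℝ)+1) * θ : ℝ)) * Complex.I) := by
    rw [← Complex.exp_nat_mul]
    push_cast
    ring_nf
  rw [hpow] at hroot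
  have him := congrArg Complex.im hroot
  simp only [Complex.mul_im, Complex.sub_im, Complex.sub_re, Complex.mul_re,
    Complex.ofReal_re, Complex.ofReal_im, Complex.one_im, Complex.one_re,
    Complex.exp_ofReal_mul_I_re, Complex.exp_ofReal_mul_I_im] at him
  have hre : c.re = Real.cos θ := Complex.exp_ofReal_mul_I_re θ
  have him2 : c.im = Real.sin θ := Complex.exp_ofReal_mul_I_im θ
  rw [hre, him2] at him
  have hsin : 0 < Real.sin θ := Real.sin_pos_of_pos_of_lt_pi hθ0 hθπ
  have hsin2 : 0 < Real.sin (((L:ℝ)+1) * θ) :=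
    Real.sin_pos_of_pos_of_lt_pi (by positivity) hlt'
  have hcos : Real.cos (((L:ℝ)+1) * θ) ≤ 1 := Real.cos_le_one _
  have hcos2 : Real.cos θ ≤ 1 := Real.cos_le_one θ
  nlinarith [hsin2, hsin, hcos, hcos2]
end

section
/- For t > 1, the real root z of 1 - tz - z^{L+1}(t-z) = 0 in (0, 1/t) satisfies z → 1/t as L → ∞; more precisely, for every ε > 0 with 0 < 1/t - ε, there exists L_0 such that for all L ≥ L_0, the root z lies in (1/t - ε, 1/t). -/
theorem root_tends_to_one_over_t (t : ℝ) (ht : 1 < t) (z : ℕ → ℝ)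
    (hroot : ∀ L : ℕ, 0 < L →
      0 < z L ∧ z L < 1 / t ∧ 1 - t * z L - (z L) ^ (L + 1) * (t - z L) = 0) :
    ∀ ε : ℝ, 0 < ε → ε < 1 / t →
      ∃ L₀ : ℕ, ∀ L : ℕ, L₀ ≤ L → 1 / t - ε < z L ∧ z L < 1 / t := by
  intro ε hε hεt
  have ht0 : (0:ℝ) < t := lt_trans one_pos ht
  have hlt1 : (1:ℝ)/t < 1 := by
    rw [div_lt_one ht0]; exact ht
  obtain ⟨n, hn⟩ := exists_pow_lt_of_lt_one hε hlt1
  refine ⟨max 1 n, fun L hL => ?_⟩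
  have hL1 : 0 < L := lt_of_lt_of_le (by norm_num) (le_trans (le_max_left 1 n) hL)
  obtain ⟨hz0, hz1, heq⟩ := hroot L hL1
  refine ⟨?_, hz1⟩
  have hzt : z L < t := lt_trans hz1 (lt_trans hlt1 ht)
  have hpow : (z L) ^ (L + 1) < ε := by
    calc (z L) ^ (L + 1) ≤ ((1:ℝ)/t) ^ (L + 1) :=
          pow_le_pow_left₀ hz0.le hz1.le _
      _ ≤ ((1:ℝ)/t) ^ n := by
          apply pow_le_pow_of_le_one (by positivity) hlt1.le
          omega
      _ < ε := hn
  have hmul : (z L) ^ (L + 1) * (t - z L) < ε * t := by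
    apply mul_lt_mul' hpow.le (by linarith) (by linarith) hε
  have h1 : 1 - t * z L < ε * t := by linarith [heq]
  have : 1/t - ε < z L := by
    rw [div_sub' (ne_of_gt ht0), div_lt_iff₀ ht0]
    nlinarith
  exact this
end
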